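/- arXiv:2007.02614 — 2 statements merged into one kernel-verified Lean document; each statement's English description precedes it below -/
import Mathlib

section
/- Let n ≥ 1, 1 ≤ r ≤ n, and let c₁, …, c_r be positive constants. Then the function Q(c₁,…,c_r;n)(x) = −Σ_{i=1}^r c_i ln x_i + (1/2) Σ_{j=r+1}^n x_j² on the domain {x ∈ ℝⁿ : x₁ > 0, …, x_r > 0} is smooth and strictly convex (its Hessian is positive definite at every point), its Calabi metric is flat, and its Fubini–Pick form is parallel (∇A = 0); that is, its graph is a canonical Calabi hypersurface. -/
open scoped BigOperators
open Real Set

noncomputable section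

/-- The partial derivative `∂g/∂x_i`. -/
def pd {n : ℕ} (i : Fin n) (g : (Fin n → ℝ) → ℝ) : (Fin n → ℝ) → ℝ :=
  fun x => fderiv ℝ g x (Pi.single i 1)

/-- The Hessian matrix `(f_{ij}) = (∂²f/∂x_i∂x_j)`. -/
def hessMat {n : ℕ} (f : (Fin n → ℝ) → ℝ) (x : Fin n → ℝ) : Matrix (Fin n) (Fin n) ℝ :=
  Matrix.of fun i j => pd i (pd j f) x

/-- The inverse Hessian matrix `(f^{ij})`. -/
def hessInv {n : ℕ} (f : (Fin n → ℝ) → ℝ) (x : Fin n → ℝ) : Matrix (Fin n) (Fin n) ℝ :=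
  (hessMat f x)⁻¹

/-- Third partial derivatives `f_{ijk}`. -/
def f3 {n : ℕ} (f : (Fin n → ℝ) → ℝ) (i j k : Fin n) : (Fin n → ℝ) → ℝ :=
  pd i (pd j (pd k f))

/-- Christoffel symbols `Γ^k_{ij} = (1/2) Σ_l f^{kl} f_{ijl}` of the Calabi metric. -/
def Gamma {n : ℕ} (f : (Fin n → ℝ) → ℝ) (k i j : Fin n) : (Fin n → ℝ) → ℝ :=
  fun x => (1 / 2) * ∑ l, hessInv f x k l * f3 f i j l x

/-- The Fubini–Pick (cubic) form components `A_{ijk} = -(1/2) f_{ijk}`. -/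
def FP {n : ℕ} (f : (Fin n → ℝ) → ℝ) (i j k : Fin n) : (Fin n → ℝ) → ℝ :=
  fun x => -(1 / 2) * f3 f i j k x

/-- The covariant derivative `A_{ijk,l}` of the Fubini–Pick form. -/
def FPcov {n : ℕ} (f : (Fin n → ℝ) → ℝ) (i j k l : Fin n) : (Fin n → ℝ) → ℝ :=
  fun x => pd l (FP f i j k) x -
    ∑ m, (Gamma f m l i x * FP f m j k x + Gamma f m l j x * FP f i m k x +
      Gamma f m l k x * FP f i j m x)

/-- The Fubini–Pick form is parallel on `Ω`: `A_{ijk,l} = 0` identically. -/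
def ParallelFP {n : ℕ} (f : (Fin n → ℝ) → ℝ) (Ω : Set (Fin n → ℝ)) : Prop :=
  ∀ i j k l : Fin n, ∀ x ∈ Ω, FPcov f i j k l x = 0

/-- The Riemann curvature tensor `R^l_{kij}` of the Calabi metric. -/
def RiemUp {n : ℕ} (f : (Fin n → ℝ) → ℝ) (l k i j : Fin n) : (Fin n → ℝ) → ℝ :=
  fun x => pd i (Gamma f l j k) x - pd j (Gamma f l i k) x +
    ∑ m, (Gamma f l i m x * Gamma f m j k x - Gamma f l j m x * Gamma f m i k x)

/-- The Riemann curvature tensor with lowered indices `R_{ijkl} = Σ_m f_{lm} R^m_{kij}`. -/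
def Riem {n : ℕ} (f : (Fin n → ℝ) → ℝ) (i j k l : Fin n) : (Fin n → ℝ) → ℝ :=
  fun x => ∑ m, hessMat f x l m * RiemUp f m k i j x

/-- The Calabi metric is flat on `Ω`. -/
def FlatCalabi {n : ℕ} (f : (Fin n → ℝ) → ℝ) (Ω : Set (Fin n → ℝ)) : Prop :=
  ∀ i j k l : Fin n, ∀ x ∈ Ω, Riem f i j k l x = 0

/-- The Ricci tensor `R_{jk} = Σ_i R^i_{kij}` of the Calabi metric. -/
def RicciC {n : ℕ} (f : (Fin n → ℝ) → ℝ) (j k : Fin n) : (Fin n → ℝ) → ℝ :=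
  fun x => ∑ i, RiemUp f i k i j x

/-- The scalar curvature `R = Σ f^{jk} R_{jk}` of the Calabi metric. -/
def ScalC {n : ℕ} (f : (Fin n → ℝ) → ℝ) : (Fin n → ℝ) → ℝ :=
  fun x => ∑ j, ∑ k, hessInv f x j k * RicciC f j k x

/-- The inner product `G_p(u,v) = Σ f_{ij}(p) u_i v_j`. -/
def Gp {n : ℕ} (f : (Fin n → ℝ) → ℝ) (p u v : Fin n → ℝ) : ℝ :=
  ∑ i, ∑ j, hessMat f p i j * u i * v j

/-- The symmetric trilinear form `A_p(u,v,w) = Σ A_{ijk}(p) u_i v_j w_k`. -/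
def Ap {n : ℕ} (f : (Fin n → ℝ) → ℝ) (p u v w : Fin n → ℝ) : ℝ :=
  ∑ i, ∑ j, ∑ k, FP f i j k p * u i * v j * w k

/-- The graph of `f` over `Ω` is Calabi affine equivalent to an open part of the graph of
`g` over `D`: there are an invertible affine transformation `φ` of `ℝⁿ` with `φ(Ω) ⊆ D`
and constants `a₁,…,aₙ,b` with `g(φ(x)) = f(x) + Σ aⱼ xⱼ + b` on `Ω`. -/
def CalabiEquivOpenPart {n : ℕ} (f : (Fin n → ℝ) → ℝ) (Ω : Set (Fin n → ℝ))
    (g : (Fin n → ℝ) → ℝ) (D : Set (Fin n → ℝ)) : Prop :=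
  ∃ φ : (Fin n → ℝ) ≃ᵃ[ℝ] (Fin n → ℝ), ∃ a : Fin n → ℝ, ∃ b : ℝ,
    φ '' Ω ⊆ D ∧ ∀ x ∈ Ω, g (φ x) = f x + (∑ j, a j * x j) + b

/-- The function `Q(c₁,…,c_r;n)(x) = -Σ_{i<r} cᵢ ln xᵢ + (1/2) Σ_{j≥r} xⱼ²`
(indices written 0-based). -/
def Qfun (n r : ℕ) (c : Fin n → ℝ) : (Fin n → ℝ) → ℝ :=
  fun x => -(∑ i : Fin n, if (i : ℕ) < r then c i * Real.log (x i) else 0) +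
    (1 / 2) * ∑ j : Fin n, if r ≤ (j : ℕ) then (x j) ^ 2 else 0

/-- The domain of `Q(c₁,…,c_r;n)`: the first `r` coordinates are positive. -/
def Qdom (n r : ℕ) : Set (Fin n → ℝ) := {x | ∀ i : Fin n, (i : ℕ) < r → 0 < x i}

/-- The elliptic paraboloid is the graph of `(1/2) Σ xⱼ²`. -/
def paraboloid (n : ℕ) : (Fin n → ℝ) → ℝ := fun x => (1 / 2) * ∑ j, (x j) ^ 2



-- ===== auxiliary machinery =====

lemma pd_const {n : ℕ} (i : Fin n) (a : ℝ) (x : Fin n → ℝ) : pd i (fun _ => a) x = 0 := by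
  simp [pd]

lemma pd_coord {n : ℕ} {g : ℝ → ℝ} {g' : ℝ} (k i : Fin n) {x : Fin n → ℝ}
    (h : HasDerivAt g g' (x k)) : pd i (fun y => g (y k)) x = if i = k then g' else 0 := by
  have hf : HasFDerivAt (fun y : Fin n → ℝ => g (y k))
      (g' • (ContinuousLinearMap.proj k : (Fin n → ℝ) →L[ℝ] ℝ)) x :=
    h.comp_hasFDerivAt x
      ((ContinuousLinearMap.proj (R := ℝ) (φ := fun _ : Fin n => ℝ) k).hasFDerivAt)
  rw [pd, hf.fderiv]
  simp [Pi.single_apply, eq_comm]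

lemma pd_congr_open {n : ℕ} {S : Set (Fin n → ℝ)} (hS : IsOpen S)
    {g G : (Fin n → ℝ) → ℝ} (hgG : ∀ y ∈ S, g y = G y) {x : Fin n → ℝ} (hx : x ∈ S)
    (i : Fin n) : pd i g x = pd i G x := by
  unfold pd
  rw [Filter.EventuallyEq.fderiv_eq (Filter.eventuallyEq_of_mem (hS.mem_nhds hx) hgG)]

lemma qdom_open (n r : ℕ) : IsOpen (Qdom n r) := by
  have : Qdom n r = ⋂ i : Fin n, {x : Fin n → ℝ | (i : ℕ) < r → 0 < x i} := by
    ext x; simp [Qdom]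
  rw [this]
  refine isOpen_iInter_of_finite fun i => ?_
  by_cases hi : (i : ℕ) < r
  · simp only [hi, forall_true_left]
    exact isOpen_lt continuous_const (continuous_apply i)
  · simp [hi]

/-- first derivative -/
def d1v {n : ℕ} (r : ℕ) (c : Fin n → ℝ) (k : Fin n) : (Fin n → ℝ) → ℝ :=
  fun x => if (k : ℕ) < r then -(c k * (x k) ^ (-1 : ℤ)) else x k

/-- second derivative (diagonal entry) -/
def d2v {n : ℕ} (r : ℕ) (c : Fin n → ℝ) (k : Fin n) : (Fin n → ℝ) → ℝ :=
  fun x => if (k : ℕ) < r then c k * (x k) ^ (-2 : ℤ) else 1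

/-- third derivative (fully diagonal entry) -/
def d3v {n : ℕ} (r : ℕ) (c : Fin n → ℝ) (k : Fin n) : (Fin n → ℝ) → ℝ :=
  fun x => if (k : ℕ) < r then -2 * c k * (x k) ^ (-3 : ℤ) else 0

/-- explicit Christoffel symbols -/
def gv {n : ℕ} (r : ℕ) (k i j : Fin n) : (Fin n → ℝ) → ℝ :=
  fun x => if k = i ∧ i = j ∧ (k : ℕ) < r then -((x k) ^ (-1 : ℤ)) else 0

/-- explicit Fubini–Pick components -/
def fpv {n : ℕ} (r : ℕ) (c : Fin n → ℝ) (i j k : Fin n) : (Fin n → ℝ) → ℝ :=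
  fun x => if i = j ∧ j = k ∧ (i : ℕ) < r then c i * (x i) ^ (-3 : ℤ) else 0

lemma pd_Q {n : ℕ} (r : ℕ) (c : Fin n → ℝ) (k : Fin n) {x : Fin n → ℝ}
    (hx : x ∈ Qdom n r) : pd k (Qfun n r c) x = d1v r c k x := by
  have h1 : HasFDerivAt (fun y : Fin n → ℝ => ∑ i : Fin n, if (i : ℕ) < r then c i * Real.log (y i) else 0)
      (∑ i : Fin n, (if (i : ℕ) < r then c i * (x i)⁻¹ else 0) •
        (ContinuousLinearMap.proj (R := ℝ) (φ := fun _ : Fin n => ℝ) i)) x := by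
    apply HasFDerivAt.fun_sum
    intro i _
    by_cases hi : (i : ℕ) < r
    · simp only [hi, if_true]
      have hl := (Real.hasDerivAt_log (ne_of_gt (hx i hi))).const_mul (c i)
      have h := hl.comp_hasFDerivAt x
        ((ContinuousLinearMap.proj (R := ℝ) (φ := fun _ : Fin n => ℝ) i).hasFDerivAt)
      exact h
    · simp only [hi, if_false, zero_smul]
      exact hasFDerivAt_const 0 x
  have h2 : HasFDerivAt (fun y : Fin n → ℝ => ∑ j : Fin n, if r ≤ (j : ℕ) then (y j) ^ 2 else 0)
      (∑ j : Fin n, (if r ≤ (j : ℕ) then 2 * x j else 0) •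
        (ContinuousLinearMap.proj (R := ℝ) (φ := fun _ : Fin n => ℝ) j)) x := by
    apply HasFDerivAt.fun_sum
    intro j _
    by_cases hj : r ≤ (j : ℕ)
    · simp only [hj, if_true]
      have : HasDerivAt (fun t : ℝ => t ^ 2) (2 * x j) (x j) := by
        simpa using hasDerivAt_pow 2 (x j)
      exact this.comp_hasFDerivAt x
        ((ContinuousLinearMap.proj (R := ℝ) (φ := fun _ : Fin n => ℝ) j).hasFDerivAt)
    · simp only [hj, if_false, zero_smul]
      exact hasFDerivAt_const 0 x
  have hQ : HasFDerivAt (Qfun n r c)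
      (-(∑ i : Fin n, (if (i : ℕ) < r then c i * (x i)⁻¹ else 0) •
        (ContinuousLinearMap.proj (R := ℝ) (φ := fun _ : Fin n => ℝ) i)) +
       (1/2 : ℝ) • (∑ j : Fin n, (if r ≤ (j : ℕ) then 2 * x j else 0) •
        (ContinuousLinearMap.proj (R := ℝ) (φ := fun _ : Fin n => ℝ) j))) x := by
    exact h1.neg.add (h2.const_mul (1/2 : ℝ))
  rw [pd, hQ.fderiv]
  simp only [ContinuousLinearMap.add_apply, ContinuousLinearMap.neg_apply,
    ContinuousLinearMap.smul_apply, ContinuousLinearMap.sum_apply,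
    ContinuousLinearMap.proj_apply, Pi.single_apply, smul_eq_mul, mul_ite, mul_one, mul_zero,
    Finset.sum_ite_eq', Finset.mem_univ, if_true]
  by_cases hk : (k : ℕ) < r
  · have : ¬ r ≤ (k : ℕ) := by omega
    simp [d1v, hk, this, zpow_neg_one]
  · have : r ≤ (k : ℕ) := by omega
    simp [d1v, hk, this]

lemma pd_d1 {n : ℕ} (r : ℕ) (c : Fin n → ℝ) (j k : Fin n) {x : Fin n → ℝ}
    (hx : x ∈ Qdom n r) : pd j (d1v r c k) x = if j = k then d2v r c k x else 0 := by
  by_cases hk : (k : ℕ) < r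
  · have hne : x k ≠ 0 := ne_of_gt (hx k hk)
    have hg : HasDerivAt (fun t : ℝ => -(c k * t ^ (-1 : ℤ)))
        (c k * (x k) ^ (-2 : ℤ)) (x k) := by
      have := ((hasDerivAt_zpow (-1) (x k) (Or.inl hne)).const_mul (c k)).neg
      exact this.congr_deriv (by push_cast; ring)
    have hfun : d1v r c k = fun y : Fin n → ℝ => -(c k * (y k) ^ (-1 : ℤ)) := by
      funext y; simp [d1v, hk]
    rw [hfun, pd_coord k j hg]
    simp only [d2v, hk, if_true]
  · have hg : HasDerivAt (fun t : ℝ => t) 1 (x k) := hasDerivAt_id (x k)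
    have hfun : d1v r c k = fun y : Fin n → ℝ => y k := by
      funext y; simp [d1v, hk]
    rw [hfun, pd_coord k j hg]
    simp only [d2v, hk, if_false]

lemma hess_eq {n : ℕ} (r : ℕ) (c : Fin n → ℝ) {x : Fin n → ℝ} (hx : x ∈ Qdom n r) :
    hessMat (Qfun n r c) x = Matrix.diagonal (fun k => d2v r c k x) := by
  ext i j
  have h1 : pd i (pd j (Qfun n r c)) x = pd i (d1v r c j) x :=
    pd_congr_open (qdom_open n r) (fun y hy => pd_Q r c j hy) hx i
  rw [hessMat, Matrix.of_apply, h1, pd_d1 r c i j hx, Matrix.diagonal_apply]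
  by_cases hij : i = j
  · subst hij; simp
  · simp [hij]

lemma d2v_pos {n : ℕ} (r : ℕ) (c : Fin n → ℝ) (hc : ∀ i : Fin n, (i : ℕ) < r → 0 < c i)
    {x : Fin n → ℝ} (hx : x ∈ Qdom n r) (k : Fin n) : 0 < d2v r c k x := by
  rw [d2v]
  by_cases hk : (k : ℕ) < r
  · simp only [hk, if_true]
    have := hc k hk; have := hx k hk
    positivity
  · simp [hk]

lemma hessInv_eq {n : ℕ} (r : ℕ) (c : Fin n → ℝ) (hc : ∀ i : Fin n, (i : ℕ) < r → 0 < c i)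
    {x : Fin n → ℝ} (hx : x ∈ Qdom n r) :
    hessInv (Qfun n r c) x = Matrix.diagonal (fun k => (d2v r c k x)⁻¹) := by
  rw [hessInv, hess_eq r c hx]
  apply Matrix.inv_eq_right_inv
  rw [Matrix.diagonal_mul_diagonal]
  have : (fun k => d2v r c k x * (d2v r c k x)⁻¹) = fun _ => (1:ℝ) := by
    funext k
    exact mul_inv_cancel₀ (ne_of_gt (d2v_pos r c hc hx k))
  rw [this, Matrix.diagonal_one]

lemma f3_eq {n : ℕ} (r : ℕ) (c : Fin n → ℝ) (i j k : Fin n) {x : Fin n → ℝ}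
    (hx : x ∈ Qdom n r) :
    f3 (Qfun n r c) i j k x = if i = j ∧ j = k then d3v r c j x else 0 := by
  by_cases hjk : j = k
  · subst hjk
    have h2 : ∀ y ∈ Qdom n r, pd j (pd j (Qfun n r c)) y = d2v r c j y := by
      intro y hy
      rw [pd_congr_open (qdom_open n r) (fun z hz => pd_Q r c j hz) hy j, pd_d1 r c j j hy]
      simp
    have h3 : f3 (Qfun n r c) i j j x = pd i (d2v r c j) x :=
      pd_congr_open (qdom_open n r) h2 hx i
    rw [h3]
    by_cases hj : (j : ℕ) < r
    · have hne : x j ≠ 0 := ne_of_gt (hx j hj)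
      have hg : HasDerivAt (fun t : ℝ => c j * t ^ (-2 : ℤ))
          (-2 * c j * (x j) ^ (-3 : ℤ)) (x j) := by
        have := (hasDerivAt_zpow (-2) (x j) (Or.inl hne)).const_mul (c j)
        exact this.congr_deriv (by push_cast; ring)
      have hfun : d2v r c j = fun y : Fin n → ℝ => c j * (y j) ^ (-2 : ℤ) := by
        funext y; simp [d2v, hj]
      rw [hfun, pd_coord j i hg]
      simp only [d3v, hj, if_true, and_true]
    · have hfun : d2v r c j = fun _ : Fin n → ℝ => (1:ℝ) := by
        funext y; simp [d2v, hj]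
      rw [hfun, pd_const]
      simp [d3v, hj]
  · have h2 : ∀ y ∈ Qdom n r, pd j (pd k (Qfun n r c)) y = (fun _ => (0:ℝ)) y := by
      intro y hy
      rw [pd_congr_open (qdom_open n r) (fun z hz => pd_Q r c k hz) hy j, pd_d1 r c j k hy]
      simp [hjk]
    have h3 : f3 (Qfun n r c) i j k x = pd i (fun _ => (0:ℝ)) x :=
      pd_congr_open (qdom_open n r) h2 hx i
    rw [h3, pd_const]
    simp [hjk]

lemma Gamma_eq {n : ℕ} (r : ℕ) (c : Fin n → ℝ) (hc : ∀ i : Fin n, (i : ℕ) < r → 0 < c i)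
    (k i j : Fin n) {x : Fin n → ℝ} (hx : x ∈ Qdom n r) :
    Gamma (Qfun n r c) k i j x = gv r k i j x := by
  have hsum : ∑ l, hessInv (Qfun n r c) x k l * f3 (Qfun n r c) i j l x
      = (d2v r c k x)⁻¹ * f3 (Qfun n r c) i j k x := by
    rw [Finset.sum_eq_single k]
    · rw [hessInv_eq r c hc hx, Matrix.diagonal_apply_eq]
    · intro l _ hlk
      rw [hessInv_eq r c hc hx, Matrix.diagonal_apply_ne' _ hlk, zero_mul]
    · simp
  show (1 / 2 : ℝ) * ∑ l, hessInv (Qfun n r c) x k l * f3 (Qfun n r c) i j l x = gv r k i j x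
  rw [hsum, f3_eq r c i j k hx]
  by_cases hijk : i = j ∧ j = k
  · obtain ⟨rfl, rfl⟩ := hijk
    simp only [and_self, if_true, gv, true_and]
    by_cases hi : (i : ℕ) < r
    · have hne : x i ≠ 0 := ne_of_gt (hx i hi)
      have hcne : c i ≠ 0 := ne_of_gt (hc i hi)
      simp only [d2v, d3v, hi, if_true]
      rw [show ((-1 : ℤ) = -(1:ℕ)) from rfl, show ((-2 : ℤ) = -(2:ℕ)) from rfl,
        show ((-3 : ℤ) = -(3:ℕ)) from rfl]
      simp only [zpow_neg, zpow_natCast]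
      field_simp
    · simp [d2v, d3v, hi]
  · simp only [hijk, if_false, mul_zero, gv]
    have : ¬ (k = i ∧ i = j ∧ (k : ℕ) < r) := by
      rintro ⟨rfl, rfl, -⟩
      exact hijk ⟨rfl, rfl⟩
    simp [this]

lemma FP_eq {n : ℕ} (r : ℕ) (c : Fin n → ℝ) (i j k : Fin n) {x : Fin n → ℝ}
    (hx : x ∈ Qdom n r) : FP (Qfun n r c) i j k x = fpv r c i j k x := by
  show -(1/2 : ℝ) * f3 (Qfun n r c) i j k x = fpv r c i j k x
  rw [f3_eq r c i j k hx]
  by_cases hijk : i = j ∧ j = k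
  · obtain ⟨rfl, rfl⟩ := hijk
    simp only [and_self, if_true, fpv, true_and]
    by_cases hi : (i : ℕ) < r
    · simp only [d3v, hi, if_true]
      ring
    · simp [d3v, hi]
  · simp only [hijk, if_false, mul_zero, fpv]
    have : ¬ (i = j ∧ j = k ∧ (i : ℕ) < r) := by
      rintro ⟨rfl, rfl, -⟩
      exact hijk ⟨rfl, rfl⟩
    simp [this]

lemma pd_fpv {n : ℕ} (r : ℕ) (c : Fin n → ℝ) (l i j k : Fin n) {x : Fin n → ℝ}
    (hx : x ∈ Qdom n r) :
    pd l (fpv r c i j k) x = if i = j ∧ j = k ∧ (i : ℕ) < r then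
      (if l = i then -3 * c i * (x i) ^ (-4 : ℤ) else 0) else 0 := by
  by_cases hcond : i = j ∧ j = k ∧ (i : ℕ) < r
  · obtain ⟨rfl, rfl, hi⟩ := hcond
    have hne : x i ≠ 0 := ne_of_gt (hx i hi)
    have hg : HasDerivAt (fun t : ℝ => c i * t ^ (-3 : ℤ))
        (-3 * c i * (x i) ^ (-4 : ℤ)) (x i) := by
      have := (hasDerivAt_zpow (-3) (x i) (Or.inl hne)).const_mul (c i)
      exact this.congr_deriv (by push_cast; ring)
    have hfun : fpv r c i i i = fun y : Fin n → ℝ => c i * (y i) ^ (-3 : ℤ) := by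
      funext y; simp [fpv, hi]
    rw [hfun, pd_coord i l hg]
    simp [hi]
  · have hfun : fpv r c i j k = fun _ : Fin n → ℝ => (0 : ℝ) := by
      funext y; simp [fpv, hcond]
    rw [hfun, pd_const]
    simp [hcond]

lemma pd_gv {n : ℕ} (r : ℕ) (i l j k : Fin n) {x : Fin n → ℝ} (hx : x ∈ Qdom n r) :
    pd i (gv r l j k) x = if l = j ∧ j = k ∧ (l : ℕ) < r then
      (if i = l then (x l) ^ (-2 : ℤ) else 0) else 0 := by
  by_cases hcond : l = j ∧ j = k ∧ (l : ℕ) < r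
  · obtain ⟨rfl, rfl, hl⟩ := hcond
    have hne : x l ≠ 0 := ne_of_gt (hx l hl)
    have hg : HasDerivAt (fun t : ℝ => -(t ^ (-1 : ℤ))) ((x l) ^ (-2 : ℤ)) (x l) := by
      have := (hasDerivAt_zpow (-1) (x l) (Or.inl hne)).neg
      exact this.congr_deriv (by push_cast; ring)
    have hfun : gv r l l l = fun y : Fin n → ℝ => -((y l) ^ (-1 : ℤ)) := by
      funext y; simp [gv, hl]
    rw [hfun, pd_coord l i hg]
    simp [hl]
  · have hfun : gv r l j k = fun _ : Fin n → ℝ => (0 : ℝ) := by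
      funext y; simp [gv, hcond]
    rw [hfun, pd_const]
    simp [hcond]

lemma FPcov_zero {n : ℕ} (r : ℕ) (c : Fin n → ℝ) (hc : ∀ i : Fin n, (i : ℕ) < r → 0 < c i)
    (i j k l : Fin n) {x : Fin n → ℝ} (hx : x ∈ Qdom n r) :
    FPcov (Qfun n r c) i j k l x = 0 := by
  have hpd : pd l (FP (Qfun n r c) i j k) x = pd l (fpv r c i j k) x :=
    pd_congr_open (qdom_open n r) (fun y hy => FP_eq r c i j k hy) hx l
  have hsum : ∑ m, (Gamma (Qfun n r c) m l i x * FP (Qfun n r c) m j k x +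
      Gamma (Qfun n r c) m l j x * FP (Qfun n r c) i m k x +
      Gamma (Qfun n r c) m l k x * FP (Qfun n r c) i j m x)
      = ∑ m, (gv r m l i x * fpv r c m j k x + gv r m l j x * fpv r c i m k x +
        gv r m l k x * fpv r c i j m x) := by
    refine Finset.sum_congr rfl fun m _ => ?_
    rw [Gamma_eq r c hc m l i hx, Gamma_eq r c hc m l j hx, Gamma_eq r c hc m l k hx,
      FP_eq r c m j k hx, FP_eq r c i m k hx, FP_eq r c i j m hx]
  have hcollapse : ∑ m, (gv r m l i x * fpv r c m j k x + gv r m l j x * fpv r c i m k x +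
      gv r m l k x * fpv r c i j m x)
      = gv r l l i x * fpv r c l j k x + gv r l l j x * fpv r c i l k x +
        gv r l l k x * fpv r c i j l x := by
    refine Finset.sum_eq_single l (fun m _ hm => ?_) (by simp)
    simp [gv, hm]
  show pd l (FP (Qfun n r c) i j k) x - _ = 0
  rw [hpd, hsum, hcollapse, pd_fpv r c l i j k hx]
  by_cases hmain : l = i ∧ i = j ∧ j = k ∧ (i : ℕ) < r
  · obtain ⟨rfl, rfl, rfl, hir⟩ := hmain
    have hne : x l ≠ 0 := ne_of_gt (hx l hir)
    simp only [gv, fpv, and_self, true_and, if_true, hir, if_pos rfl]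
    simp only [zpow_neg, zpow_ofNat, zpow_one]
    field_simp
    ring
  · have hz1 : (if i = j ∧ j = k ∧ (i : ℕ) < r then
        (if l = i then -3 * c i * (x i) ^ (-4 : ℤ) else 0) else 0) = 0 := by
      split_ifs with hA hB
      · exact absurd ⟨hB, hA⟩ hmain
      · rfl
      · rfl
    have hz2 : gv r l l i x * fpv r c l j k x = 0 := by
      rcases eq_or_ne l i with rfl | hli
      · by_cases hB : l = j ∧ j = k ∧ (l : ℕ) < r
        · exact absurd ⟨rfl, hB⟩ hmain
        · simp [fpv, hB]
      · simp [gv, hli]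
    have hz3 : gv r l l j x * fpv r c i l k x = 0 := by
      by_cases hA : l = j
      · by_cases hB : i = l ∧ l = k ∧ (i : ℕ) < r
        · exact absurd ⟨hB.1.symm, hB.1.trans hA, hA.symm.trans hB.2.1, hB.2.2⟩ hmain
        · simp [fpv, hB]
      · simp [gv, hA]
    have hz4 : gv r l l k x * fpv r c i j l x = 0 := by
      by_cases hA : l = k
      · by_cases hB : i = j ∧ j = l ∧ (i : ℕ) < r
        · exact absurd ⟨hB.2.1.symm.trans hB.1.symm, hB.1, hB.2.1.trans hA, hB.2.2⟩ hmain
        · simp [fpv, hB]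
      · simp [gv, hA]
    rw [hz1, hz2, hz3, hz4]
    ring

lemma RiemUp_zero {n : ℕ} (r : ℕ) (c : Fin n → ℝ) (hc : ∀ i : Fin n, (i : ℕ) < r → 0 < c i)
    (l k i j : Fin n) {x : Fin n → ℝ} (hx : x ∈ Qdom n r) :
    RiemUp (Qfun n r c) l k i j x = 0 := by
  have h1 : pd i (Gamma (Qfun n r c) l j k) x = pd i (gv r l j k) x :=
    pd_congr_open (qdom_open n r) (fun y hy => Gamma_eq r c hc l j k hy) hx i
  have h2 : pd j (Gamma (Qfun n r c) l i k) x = pd j (gv r l i k) x :=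
    pd_congr_open (qdom_open n r) (fun y hy => Gamma_eq r c hc l i k hy) hx j
  have hsum : ∑ m, (Gamma (Qfun n r c) l i m x * Gamma (Qfun n r c) m j k x -
      Gamma (Qfun n r c) l j m x * Gamma (Qfun n r c) m i k x) = 0 := by
    refine Finset.sum_eq_zero fun m _ => ?_
    rw [Gamma_eq r c hc l i m hx, Gamma_eq r c hc m j k hx, Gamma_eq r c hc l j m hx,
      Gamma_eq r c hc m i k hx]
    by_cases hall : m = l ∧ l = i ∧ i = j ∧ j = k ∧ (l : ℕ) < r
    · obtain ⟨rfl, rfl, rfl, rfl, hlr⟩ := hall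
      ring
    · have hz1 : gv r l i m x * gv r m j k x = 0 := by
        by_cases hA : l = i ∧ i = m ∧ (l : ℕ) < r
        · by_cases hB : m = j ∧ j = k ∧ (m : ℕ) < r
          · exact absurd ⟨(hA.1.trans hA.2.1).symm, hA.1, hA.2.1.trans hB.1, hB.2.1,
              hA.2.2⟩ hall
          · simp [gv, hB]
        · simp [gv, hA]
      have hz2 : gv r l j m x * gv r m i k x = 0 := by
        by_cases hA : l = j ∧ j = m ∧ (l : ℕ) < r
        · by_cases hB : m = i ∧ i = k ∧ (m : ℕ) < r
          · exact absurd ⟨(hA.1.trans hA.2.1).symm, (hA.1.trans hA.2.1).trans hB.1,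
              hB.1.symm.trans hA.2.1.symm, (hA.2.1.trans hB.1).trans hB.2.1, hA.2.2⟩ hall
          · simp [gv, hB]
        · simp [gv, hA]
      rw [hz1, hz2, sub_zero]
  show pd i (Gamma (Qfun n r c) l j k) x - pd j (Gamma (Qfun n r c) l i k) x + _ = 0
  rw [h1, h2, pd_gv r i l j k hx, pd_gv r j l i k hx, hsum]
  by_cases hall : l = i ∧ i = j ∧ j = k ∧ (l : ℕ) < r
  · obtain ⟨rfl, rfl, rfl, hlr⟩ := hall
    simp [hlr]
  · have hz1 : (if l = j ∧ j = k ∧ (l : ℕ) < r then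
        (if i = l then (x l) ^ (-2 : ℤ) else 0) else 0) = 0 := by
      split_ifs with hA hB
      · exact absurd ⟨hB.symm, hB.trans hA.1, hA.2.1, hA.2.2⟩ hall
      · rfl
      · rfl
    have hz2 : (if l = i ∧ i = k ∧ (l : ℕ) < r then
        (if j = l then (x l) ^ (-2 : ℤ) else 0) else 0) = 0 := by
      split_ifs with hA hB
      · exact absurd ⟨hA.1, (hB.trans hA.1).symm, (hB.trans hA.1).trans hA.2.1,
          hA.2.2⟩ hall
      · rfl
      · rfl
    rw [hz1, hz2]
    ring

lemma Q_contDiffOn {n : ℕ} (r : ℕ) (c : Fin n → ℝ) :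
    ContDiffOn ℝ (⊤ : ℕ∞) (Qfun n r c) (Qdom n r) := by
  intro x hx
  apply ContDiffAt.contDiffWithinAt
  apply ContDiffAt.add
  · apply ContDiffAt.neg
    apply ContDiffAt.sum
    intro i _
    by_cases hi : (i : ℕ) < r
    · simp only [hi, if_true]
      exact contDiffAt_const.mul ((Real.contDiffAt_log.mpr (ne_of_gt (hx i hi))).comp x
        ((ContinuousLinearMap.proj (R := ℝ) (φ := fun _ : Fin n => ℝ) i).contDiff.contDiffAt))
    · simp only [hi, if_false]
      exact contDiffAt_const
  · apply contDiffAt_const.mul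
    apply ContDiffAt.sum
    intro j _
    by_cases hj : r ≤ (j : ℕ)
    · simp only [hj, if_true]
      exact ((ContinuousLinearMap.proj (R := ℝ) (φ := fun _ : Fin n => ℝ)
        j).contDiff.contDiffAt).pow 2
    · simp only [hj, if_false]
      exact contDiffAt_const

/-- the graph of `Q(c₁,…,c_r;n)` is a canonical Calabi hypersurface:
`Q` is smooth and strictly convex, its Calabi metric is flat, and its Fubini–Pick form
is parallel. -/
theorem stmt17 {n : ℕ} (hn : 1 ≤ n) (r : ℕ) (hr1 : 1 ≤ r) (hrn : r ≤ n)
    (c : Fin n → ℝ) (hc : ∀ i : Fin n, (i : ℕ) < r → 0 < c i) :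
    ContDiffOn ℝ (⊤ : ℕ∞) (Qfun n r c) (Qdom n r) ∧
    (∀ x ∈ Qdom n r, (hessMat (Qfun n r c) x).PosDef) ∧
    FlatCalabi (Qfun n r c) (Qdom n r) ∧
    ParallelFP (Qfun n r c) (Qdom n r) := by
  refine ⟨Q_contDiffOn r c, fun x hx => ?_, fun i j k l x hx => ?_, fun i j k l x hx => ?_⟩
  · rw [hess_eq r c hx]
    exact Matrix.PosDef.diagonal fun k => d2v_pos r c hc hx k
  · show ∑ m, hessMat (Qfun n r c) x l m * RiemUp (Qfun n r c) m k i j x = 0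
    refine Finset.sum_eq_zero fun m _ => ?_
    rw [RiemUp_zero r c hc m k i j hx, mul_zero]
  · exact FPcov_zero r c hc i j k l hx

end
end

section
/- Let c > 0 and let D = I₁ × I₂ × I₃ ⊆ ℝ³ be a product of open intervals with I₂ ⊆ (0, ∞). Suppose x : D → ℝ⁴ is a smooth map satisfying, with Y = (0,0,0,1): ∂²x/∂y₁² = c ∂x/∂y₁ + Y; ∂²x/∂y₁∂y₂ = c ∂x/∂y₂; ∂²x/∂y₁∂y₃ = c ∂x/∂y₃; ∂²x/∂y₂² = c ∂x/∂y₁ + Y; ∂²x/∂y₂∂y₃ = c coth(c y₂) ∂x/∂y₃; and ∂²x/∂y₃² = c sinh²(c y₂) ∂x/∂y₁ − c sinh(c y₂) cosh(c y₂) ∂x/∂y₂ + sinh²(c y₂) Y. Then there exist constant vectors A₁, A₂, A₃, A₄ ∈ ℝ⁴ such that for all (y₁,y₂,y₃) ∈ D, x(y₁,y₂,y₃) = e^{c y₁} ( A₂ cosh(c y₂) + (A₃ cos(c y₃) + A₄ sin(c y₃)) sinh(c y₂) ) + A₁ + (0, 0, 0, −y₁/c). -/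
set_option maxHeartbeats 1000000


open scoped BigOperators
open Real Set

noncomputable section

/-- The partial derivative `∂x/∂yᵢ` of an `ℝ⁴`-valued map on `ℝ³`. -/
def pdv (i : Fin 3) (x : (Fin 3 → ℝ) → (Fin 4 → ℝ)) : (Fin 3 → ℝ) → (Fin 4 → ℝ) :=
  fun y => fderiv ℝ x y (Pi.single i 1)

private lemma clm_eq_zero (L : (Fin 3 → ℝ) →L[ℝ] ℝ)
    (h : ∀ i : Fin 3, L (Pi.single i 1) = 0) : L = 0 := by
  apply ContinuousLinearMap.coe_injective
  apply Module.Basis.ext (Pi.basisFun ℝ (Fin 3))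
  intro i
  simpa using h i

private lemma const_on (D : Set (Fin 3 → ℝ)) (hcx : Convex ℝ D) (ho : IsOpen D)
    (F : (Fin 3 → ℝ) → ℝ)
    (h : ∀ y ∈ D, ∃ L : (Fin 3 → ℝ) →L[ℝ] ℝ, HasFDerivAt F L y ∧
      ∀ i : Fin 3, L (Pi.single i 1) = 0) :
    ∀ y ∈ D, ∀ y' ∈ D, F y = F y' := by
  intro y hy y' hy'
  refine hcx.is_const_of_fderivWithin_eq_zero
    (fun t ht => ((h t ht).choose_spec.1.differentiableAt).differentiableWithinAt)
    (fun t ht => ?_) hy hy'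
  rw [fderivWithin_of_isOpen ho ht]
  obtain ⟨L, hL, hL0⟩ := h t ht
  rw [hL.fderiv]
  exact clm_eq_zero _ hL0

private lemma key (c : ℝ) (hc : 0 < c) (D : Set (Fin 3 → ℝ)) (hDo : IsOpen D)
    (hDcx : Convex ℝ D) (hpos : ∀ y ∈ D, 0 < y 1)
    (z z₁ z₂ z₃ : (Fin 3 → ℝ) → ℝ)
    (hdz : ∀ y ∈ D, DifferentiableAt ℝ z y)
    (hdz1 : ∀ y ∈ D, DifferentiableAt ℝ z₁ y)
    (hdz2 : ∀ y ∈ D, DifferentiableAt ℝ z₂ y)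
    (hdz3 : ∀ y ∈ D, DifferentiableAt ℝ z₃ y)
    (e0 : ∀ y ∈ D, fderiv ℝ z y (Pi.single 0 1) = z₁ y)
    (e1 : ∀ y ∈ D, fderiv ℝ z y (Pi.single 1 1) = z₂ y)
    (e2 : ∀ y ∈ D, fderiv ℝ z y (Pi.single 2 1) = z₃ y)
    (d10 : ∀ y ∈ D, fderiv ℝ z₁ y (Pi.single 0 1) = c * z₁ y)
    (d11 : ∀ y ∈ D, fderiv ℝ z₁ y (Pi.single 1 1) = c * z₂ y)
    (d12 : ∀ y ∈ D, fderiv ℝ z₁ y (Pi.single 2 1) = c * z₃ y)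
    (d20 : ∀ y ∈ D, fderiv ℝ z₂ y (Pi.single 0 1) = c * z₂ y)
    (d21 : ∀ y ∈ D, fderiv ℝ z₂ y (Pi.single 1 1) = c * z₁ y)
    (d22 : ∀ y ∈ D, fderiv ℝ z₂ y (Pi.single 2 1)
        = c * (Real.cosh (c * y 1) / Real.sinh (c * y 1)) * z₃ y)
    (d30 : ∀ y ∈ D, fderiv ℝ z₃ y (Pi.single 0 1) = c * z₃ y)
    (d31 : ∀ y ∈ D, fderiv ℝ z₃ y (Pi.single 1 1)
        = c * (Real.cosh (c * y 1) / Real.sinh (c * y 1)) * z₃ y)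
    (d32 : ∀ y ∈ D, fderiv ℝ z₃ y (Pi.single 2 1)
        = c * Real.sinh (c * y 1) ^ 2 * z₁ y
          - c * Real.sinh (c * y 1) * Real.cosh (c * y 1) * z₂ y) :
    ∃ k a p q : ℝ, ∀ y ∈ D,
      z y = Real.exp (c * y 0) * (a * Real.cosh (c * y 1)
        + (p * Real.cos (c * y 2) + q * Real.sin (c * y 2)) * Real.sinh (c * y 1)) - k / c := by
  rcases D.eq_empty_or_nonempty with hDe | ⟨y₀, hy₀⟩
  · exact ⟨0, 0, 0, 0, by simp [hDe]⟩
  -- Step 1 : z₁ - c z is constant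
  have hK := const_on D hDcx hDo (fun t => z₁ t - c * z t) (fun y hy => by
    refine ⟨_, (hdz1 y hy).hasFDerivAt.sub ((hdz y hy).hasFDerivAt.const_mul c), ?_⟩
    intro i
    fin_cases i <;>
      simp [ContinuousLinearMap.sub_apply, ContinuousLinearMap.smul_apply, smul_eq_mul,
        e0 y hy, e1 y hy, e2 y hy, d10 y hy, d11 y hy, d12 y hy] <;> ring)
  obtain ⟨k, hk⟩ : ∃ k : ℝ, ∀ y ∈ D, z₁ y = c * (z y + k / c) := by
    refine ⟨z₁ y₀ - c * z y₀, fun y hy => ?_⟩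
    have h' : z₁ y - c * z y = z₁ y₀ - c * z y₀ := hK y hy y₀ hy₀
    field_simp
    linarith
  -- abbreviations for atom derivatives, as a local tactic-free recipe is impossible;
  -- Step 2 : aF is constant
  have haK := const_on D hDcx hDo (fun t => Real.exp (-(c * t 0)) * (z t + k / c) *
      Real.cosh (c * t 1) - c⁻¹ * (Real.exp (-(c * t 0)) * z₂ t * Real.sinh (c * t 1)))
    (fun y hy => by
      have hy1 : 0 < y 1 := hpos y hy
      have hSne : Real.sinh (c * y 1) ≠ 0 :=
        ne_of_gt (Real.sinh_pos_iff.2 (by positivity))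
      have h0 := hasFDerivAt_apply (𝕜 := ℝ) (0 : Fin 3) y
      have h1 := hasFDerivAt_apply (𝕜 := ℝ) (1 : Fin 3) y
      have hEx := ((h0.const_mul c).neg).exp
      have hCh := (h1.const_mul c).cosh
      have hSh := (h1.const_mul c).sinh
      refine ⟨_, ((hEx.mul ((hdz y hy).hasFDerivAt.add_const (k / c))).mul hCh).sub
        (((hEx.mul (hdz2 y hy).hasFDerivAt).mul hSh).const_mul c⁻¹), ?_⟩
      intro i
      fin_cases i
      · simp [ContinuousLinearMap.add_apply, ContinuousLinearMap.smul_apply,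
          ContinuousLinearMap.sub_apply, ContinuousLinearMap.neg_apply,
          Pi.single_apply, smul_eq_mul, e0 y hy, d20 y hy, hk y hy]
        ring
      · simp [ContinuousLinearMap.add_apply, ContinuousLinearMap.smul_apply,
          ContinuousLinearMap.sub_apply, ContinuousLinearMap.neg_apply,
          Pi.single_apply, smul_eq_mul, e1 y hy, d21 y hy, hk y hy]
        field_simp
        ring
      · simp [ContinuousLinearMap.add_apply, ContinuousLinearMap.smul_apply,
          ContinuousLinearMap.sub_apply, ContinuousLinearMap.neg_apply,
          Pi.single_apply, smul_eq_mul, e2 y hy, d22 y hy, hk y hy]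
        field_simp
        ring)
  obtain ⟨a, ha⟩ : ∃ a : ℝ, ∀ y ∈ D,
      Real.exp (-(c * y 0)) * (z y + k / c) * Real.cosh (c * y 1) -
        c⁻¹ * (Real.exp (-(c * y 0)) * z₂ y * Real.sinh (c * y 1)) = a :=
    ⟨_, fun y hy => haK y hy y₀ hy₀⟩
  -- the two auxiliary (non-constant) functions
  obtain ⟨bF, hbFdef⟩ : ∃ F : (Fin 3 → ℝ) → ℝ, F = fun t =>
      (Real.exp (-(c * t 0)) * (z t + k / c) - a * Real.cosh (c * t 1)) *
        (Real.sinh (c * t 1))⁻¹ := ⟨_, rfl⟩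
  obtain ⟨βF, hβFdef⟩ : ∃ F : (Fin 3 → ℝ) → ℝ, F = fun t =>
      Real.exp (-(c * t 0)) * z₃ t * (Real.sinh (c * t 1))⁻¹ := ⟨_, rfl⟩
  -- directional derivatives of bF
  have hbB : ∀ y ∈ D, ∃ L : (Fin 3 → ℝ) →L[ℝ] ℝ, HasFDerivAt bF L y ∧
      L (Pi.single 0 1) = 0 ∧ L (Pi.single 1 1) = 0 ∧ L (Pi.single 2 1) = βF y := by
    intro y hy
    have hy1 : 0 < y 1 := hpos y hy
    have hSne : Real.sinh (c * y 1) ≠ 0 := ne_of_gt (Real.sinh_pos_iff.2 (by positivity))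
    have h0 := hasFDerivAt_apply (𝕜 := ℝ) (0 : Fin 3) y
    have h1 := hasFDerivAt_apply (𝕜 := ℝ) (1 : Fin 3) y
    have hEx := ((h0.const_mul c).neg).exp
    have hCh := (h1.const_mul c).cosh
    have hinv : HasDerivAt (fun s : ℝ => (Real.sinh (c * s))⁻¹)
        (-(Real.cosh (c * y 1) * c) / (Real.sinh (c * y 1))^2) (y 1) := by
      exact (by simpa using (((hasDerivAt_id (y 1)).const_mul c).sinh).inv hSne :
        HasDerivAt (fun s : ℝ => Real.sinh (c * s))⁻¹
          (-(Real.cosh (c * y 1) * c) / (Real.sinh (c * y 1))^2) (y 1))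
    have hinvSh : HasFDerivAt (fun t : Fin 3 → ℝ => (Real.sinh (c * t 1))⁻¹)
        ((-(Real.cosh (c * y 1) * c) / (Real.sinh (c * y 1))^2) •
          ContinuousLinearMap.proj (R := ℝ) (φ := fun _ : Fin 3 => ℝ) 1) y :=
      by have := hinv.comp_hasFDerivAt y h1; exact this
    rw [hbFdef, hβFdef]
    refine ⟨_, ((hEx.mul ((hdz y hy).hasFDerivAt.add_const (k / c))).sub
      (hCh.const_mul a)).mul hinvSh, ?_, ?_, ?_⟩
    · simp [ContinuousLinearMap.add_apply, ContinuousLinearMap.smul_apply,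
        ContinuousLinearMap.sub_apply, ContinuousLinearMap.neg_apply,
        Pi.single_apply, smul_eq_mul, e0 y hy, hk y hy]
      try ring
      try simp
    · simp [ContinuousLinearMap.add_apply, ContinuousLinearMap.smul_apply,
        ContinuousLinearMap.sub_apply, ContinuousLinearMap.neg_apply,
        Pi.single_apply, smul_eq_mul, e1 y hy]
      rw [← ha y hy]
      field_simp
      linear_combination (Real.exp (-(c * y 0)) *
        ((c * z y + k) * Real.cosh (c * y 1) -
          z₂ y * Real.sinh (c * y 1))) * (Real.cosh_sq_sub_sinh_sq (c * y 1))
    · simp [ContinuousLinearMap.add_apply, ContinuousLinearMap.smul_apply,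
        ContinuousLinearMap.sub_apply, ContinuousLinearMap.neg_apply,
        Pi.single_apply, smul_eq_mul, e2 y hy]
      ring
  -- directional derivatives of βF
  have hβB : ∀ y ∈ D, ∃ L : (Fin 3 → ℝ) →L[ℝ] ℝ, HasFDerivAt βF L y ∧
      L (Pi.single 0 1) = 0 ∧ L (Pi.single 1 1) = 0 ∧
      L (Pi.single 2 1) = -(c^2) * bF y := by
    intro y hy
    have hy1 : 0 < y 1 := hpos y hy
    have hSne : Real.sinh (c * y 1) ≠ 0 := ne_of_gt (Real.sinh_pos_iff.2 (by positivity))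
    have h0 := hasFDerivAt_apply (𝕜 := ℝ) (0 : Fin 3) y
    have h1 := hasFDerivAt_apply (𝕜 := ℝ) (1 : Fin 3) y
    have hEx := ((h0.const_mul c).neg).exp
    have hinv : HasDerivAt (fun s : ℝ => (Real.sinh (c * s))⁻¹)
        (-(Real.cosh (c * y 1) * c) / (Real.sinh (c * y 1))^2) (y 1) := by
      exact (by simpa using (((hasDerivAt_id (y 1)).const_mul c).sinh).inv hSne :
        HasDerivAt (fun s : ℝ => Real.sinh (c * s))⁻¹
          (-(Real.cosh (c * y 1) * c) / (Real.sinh (c * y 1))^2) (y 1))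
    have hinvSh : HasFDerivAt (fun t : Fin 3 → ℝ => (Real.sinh (c * t 1))⁻¹)
        ((-(Real.cosh (c * y 1) * c) / (Real.sinh (c * y 1))^2) •
          ContinuousLinearMap.proj (R := ℝ) (φ := fun _ : Fin 3 => ℝ) 1) y :=
      by have := hinv.comp_hasFDerivAt y h1; exact this
    rw [hbFdef, hβFdef]
    refine ⟨_, (hEx.mul (hdz3 y hy).hasFDerivAt).mul hinvSh, ?_, ?_, ?_⟩
    · simp [ContinuousLinearMap.add_apply, ContinuousLinearMap.smul_apply,
        ContinuousLinearMap.sub_apply, ContinuousLinearMap.neg_apply,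
        Pi.single_apply, smul_eq_mul, d30 y hy]
      ring
    · simp [ContinuousLinearMap.add_apply, ContinuousLinearMap.smul_apply,
        ContinuousLinearMap.sub_apply, ContinuousLinearMap.neg_apply,
        Pi.single_apply, smul_eq_mul, d31 y hy]
      field_simp
      ring
    · simp [ContinuousLinearMap.add_apply, ContinuousLinearMap.smul_apply,
        ContinuousLinearMap.sub_apply, ContinuousLinearMap.neg_apply,
        Pi.single_apply, smul_eq_mul, d32 y hy, hk y hy]
      rw [← ha y hy]
      field_simp
      linear_combination (-(c * z y + k)) * (Real.cosh_sq_sub_sinh_sq (c * y 1))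
  -- Step 3 : pF and qF are constant
  have hpK := const_on D hDcx hDo
    (fun t => bF t * Real.cos (c * t 2) - c⁻¹ * (βF t * Real.sin (c * t 2)))
    (fun y hy => by
      obtain ⟨Lb, hLb, hLb0, hLb1, hLb2⟩ := hbB y hy
      obtain ⟨Lβ, hLβ, hLβ0, hLβ1, hLβ2⟩ := hβB y hy
      have h2 := hasFDerivAt_apply (𝕜 := ℝ) (2 : Fin 3) y
      have hCs := (h2.const_mul c).cos
      have hSn := (h2.const_mul c).sin
      refine ⟨_, (hLb.mul hCs).sub ((hLβ.mul hSn).const_mul c⁻¹), ?_⟩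
      intro i
      fin_cases i <;>
        simp [ContinuousLinearMap.add_apply, ContinuousLinearMap.smul_apply,
          ContinuousLinearMap.sub_apply, ContinuousLinearMap.neg_apply,
          Pi.single_apply, smul_eq_mul, hLb0, hLb1, hLb2, hLβ0, hLβ1, hLβ2] <;>
        field_simp <;> ring)
  have hqK := const_on D hDcx hDo
    (fun t => bF t * Real.sin (c * t 2) + c⁻¹ * (βF t * Real.cos (c * t 2)))
    (fun y hy => by
      obtain ⟨Lb, hLb, hLb0, hLb1, hLb2⟩ := hbB y hy
      obtain ⟨Lβ, hLβ, hLβ0, hLβ1, hLβ2⟩ := hβB y hy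
      have h2 := hasFDerivAt_apply (𝕜 := ℝ) (2 : Fin 3) y
      have hCs := (h2.const_mul c).cos
      have hSn := (h2.const_mul c).sin
      refine ⟨_, (hLb.mul hSn).add ((hLβ.mul hCs).const_mul c⁻¹), ?_⟩
      intro i
      fin_cases i <;>
        simp [ContinuousLinearMap.add_apply, ContinuousLinearMap.smul_apply,
          ContinuousLinearMap.sub_apply, ContinuousLinearMap.neg_apply,
          Pi.single_apply, smul_eq_mul, hLb0, hLb1, hLb2, hLβ0, hLβ1, hLβ2] <;>
        field_simp <;> ring)
  obtain ⟨p, hp⟩ : ∃ p : ℝ, ∀ y ∈ D,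
      bF y * Real.cos (c * y 2) - c⁻¹ * (βF y * Real.sin (c * y 2)) = p :=
    ⟨_, fun y hy => hpK y hy y₀ hy₀⟩
  obtain ⟨q, hq⟩ : ∃ q : ℝ, ∀ y ∈ D,
      bF y * Real.sin (c * y 2) + c⁻¹ * (βF y * Real.cos (c * y 2)) = q :=
    ⟨_, fun y hy => hqK y hy y₀ hy₀⟩
  -- final assembly
  refine ⟨k, a, p, q, ?_⟩
  intro y hy
  have hy1 : 0 < y 1 := hpos y hy
  have hSne : Real.sinh (c * y 1) ≠ 0 := ne_of_gt (Real.sinh_pos_iff.2 (by positivity))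
  have hEne : Real.exp (c * y 0) ≠ 0 := Real.exp_ne_zero _
  have htrig := Real.sin_sq_add_cos_sq (c * y 2)
  have hb2 : p * Real.cos (c * y 2) + q * Real.sin (c * y 2) = bF y := by
    have h1 := hp y hy
    have h2 := hq y hy
    linear_combination (-Real.cos (c * y 2)) * h1 + (-Real.sin (c * y 2)) * h2 +
      bF y * htrig
  rw [hb2, hbFdef]
  show z y = Real.exp (c * y 0) * (a * Real.cosh (c * y 1) +
    ((Real.exp (-(c * y 0)) * (z y + k / c) - a * Real.cosh (c * y 1)) *
      (Real.sinh (c * y 1))⁻¹) * Real.sinh (c * y 1)) - k / c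
  rw [Real.exp_neg]
  field_simp
  ring

private lemma hasFDerivAt_comp_proj (g : (Fin 3 → ℝ) → (Fin 4 → ℝ)) (y : Fin 3 → ℝ)
    (hg : DifferentiableAt ℝ g y) (i : Fin 4) :
    HasFDerivAt (fun t => g t i)
      ((ContinuousLinearMap.proj (R := ℝ) (φ := fun _ : Fin 4 => ℝ) i).comp
        (fderiv ℝ g y)) y :=
  ((ContinuousLinearMap.proj (R := ℝ) (φ := fun _ : Fin 4 => ℝ) i).hasFDerivAt).comp y
    hg.hasFDerivAt

private lemma fderiv_comp_proj (g : (Fin 3 → ℝ) → (Fin 4 → ℝ)) (y v : Fin 3 → ℝ)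
    (hg : DifferentiableAt ℝ g y) (i : Fin 4) :
    fderiv ℝ (fun t => g t i) y v = fderiv ℝ g y v i := by
  rw [(hasFDerivAt_comp_proj g y hg i).fderiv]
  rfl


/-- integration of the structure equations in Case 𝔠₂. Any smooth
`ℝ⁴`-valued solution of the system (5.16)–(5.21) on a product of open intervals
(with `y₂ > 0`) has the stated explicit form. -/
theorem stmt19 (c : ℝ) (hc : 0 < c) (I₁ I₂ I₃ : Set ℝ)
    (hI₁o : IsOpen I₁) (hI₁c : I₁.OrdConnected)
    (hI₂o : IsOpen I₂) (hI₂c : I₂.OrdConnected) (hI₂pos : I₂ ⊆ Set.Ioi (0 : ℝ))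
    (hI₃o : IsOpen I₃) (hI₃c : I₃.OrdConnected)
    (D : Set (Fin 3 → ℝ)) (hD : D = {y | y 0 ∈ I₁ ∧ y 1 ∈ I₂ ∧ y 2 ∈ I₃})
    (x : (Fin 3 → ℝ) → (Fin 4 → ℝ)) (hx : ContDiffOn ℝ (⊤ : ℕ∞) x D)
    (Y : Fin 4 → ℝ) (hY : Y = Pi.single 3 1)
    (h11 : ∀ y ∈ D, pdv 0 (pdv 0 x) y = c • pdv 0 x y + Y)
    (h12 : ∀ y ∈ D, pdv 0 (pdv 1 x) y = c • pdv 1 x y)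
    (h13 : ∀ y ∈ D, pdv 0 (pdv 2 x) y = c • pdv 2 x y)
    (h22 : ∀ y ∈ D, pdv 1 (pdv 1 x) y = c • pdv 0 x y + Y)
    (h23 : ∀ y ∈ D, pdv 1 (pdv 2 x) y =
      (c * (Real.cosh (c * y 1) / Real.sinh (c * y 1))) • pdv 2 x y)
    (h33 : ∀ y ∈ D, pdv 2 (pdv 2 x) y =
      (c * Real.sinh (c * y 1) ^ 2) • pdv 0 x y
        - (c * Real.sinh (c * y 1) * Real.cosh (c * y 1)) • pdv 1 x y
        + Real.sinh (c * y 1) ^ 2 • Y) :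
    ∃ A₁ A₂ A₃ A₄ : Fin 4 → ℝ, ∀ y ∈ D, ∀ i : Fin 4,
      x y i = Real.exp (c * y 0) *
          (A₂ i * Real.cosh (c * y 1) +
            (A₃ i * Real.cos (c * y 2) + A₄ i * Real.sin (c * y 2)) *
              Real.sinh (c * y 1)) +
        A₁ i + (if i = 3 then -(y 0) / c else 0) := by
  -- basic facts about the domain
  have hDo : IsOpen D := by
    rw [hD]
    have : {y : Fin 3 → ℝ | y 0 ∈ I₁ ∧ y 1 ∈ I₂ ∧ y 2 ∈ I₃}
        = (fun y : Fin 3 → ℝ => y 0) ⁻¹' I₁ ∩ ((fun y : Fin 3 → ℝ => y 1) ⁻¹' I₂ ∩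
          (fun y : Fin 3 → ℝ => y 2) ⁻¹' I₃) := by
      ext t; simp [Set.mem_inter_iff, and_assoc]
    rw [this]
    exact (hI₁o.preimage (continuous_apply 0)).inter
      ((hI₂o.preimage (continuous_apply 1)).inter (hI₃o.preimage (continuous_apply 2)))
  have hDcx : Convex ℝ D := by
    intro u hu v hv α β hα hβ hαβ
    rw [hD] at hu hv ⊢
    refine ⟨?_, ?_, ?_⟩
    · have := (hI₁c.convex (𝕜 := ℝ)) hu.1 hv.1 hα hβ hαβ
      simpa using this
    · have := (hI₂c.convex (𝕜 := ℝ)) hu.2.1 hv.2.1 hα hβ hαβ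
      simpa using this
    · have := (hI₃c.convex (𝕜 := ℝ)) hu.2.2 hv.2.2 hα hβ hαβ
      simpa using this
  have hpos : ∀ y ∈ D, 0 < y 1 := by
    intro y hy
    rw [hD] at hy
    exact hI₂pos hy.2.1
  -- differentiability package
  have hxd : ∀ y ∈ D, DifferentiableAt ℝ x y := fun y hy =>
    (hx.differentiableOn (by simp)).differentiableAt (hDo.mem_nhds hy)
  have hfd : ContDiffOn ℝ (⊤ : ℕ∞) (fun y => fderiv ℝ x y) D := hx.fderiv_of_isOpen hDo (by simp)
  have hpdvCD : ∀ j : Fin 3, ContDiffOn ℝ (⊤ : ℕ∞) (pdv j x) D := fun j =>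
    hfd.clm_apply contDiffOn_const
  have hpd : ∀ (j : Fin 3), ∀ y ∈ D, DifferentiableAt ℝ (pdv j x) y := fun j y hy =>
    ((hpdvCD j).differentiableOn (by simp)).differentiableAt (hDo.mem_nhds hy)
  -- symmetry of second derivatives
  have hsymm : ∀ y ∈ D, ∀ j k : Fin 3, pdv j (pdv k x) y = pdv k (pdv j x) y := by
    intro y hy j k
    have hct : ContDiffAt ℝ (⊤ : ℕ∞) x y := hx.contDiffAt (hDo.mem_nhds hy)
    have hsym : IsSymmSndFDerivAt ℝ x y := hct.isSymmSndFDerivAt (by rw [minSmoothness_of_isRCLikeNormedField]; exact WithTop.coe_le_coe.2 le_top)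
    have hdy : DifferentiableAt ℝ (fun y => fderiv ℝ x y) y :=
      (hfd.differentiableOn (by simp)).differentiableAt (hDo.mem_nhds hy)
    have key : ∀ v w : Fin 3 → ℝ,
        fderiv ℝ (fun y => fderiv ℝ x y w) y v = fderiv ℝ (fderiv ℝ x) y v w := by
      intro v w
      have h := ((ContinuousLinearMap.apply ℝ (Fin 4 → ℝ) w).hasFDerivAt.comp y
        hdy.hasFDerivAt).fderiv
      rw [show (fun y => fderiv ℝ x y w) = (ContinuousLinearMap.apply ℝ (Fin 4 → ℝ) w) ∘
        (fderiv ℝ x) from rfl, h]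
      rfl
    show fderiv ℝ (fun t => fderiv ℝ x t (Pi.single k 1)) y (Pi.single j 1) = _
    rw [key, hsym.eq, ← key]
    rfl
  subst hY
  -- the scalar problem, one coordinate at a time
  have main : ∀ i : Fin 4, ∃ k a p q : ℝ, ∀ y ∈ D,
      x y i + y 0 * ((Pi.single 3 1 : Fin 4 → ℝ) i / c) =
        Real.exp (c * y 0) * (a * Real.cosh (c * y 1)
          + (p * Real.cos (c * y 2) + q * Real.sin (c * y 2)) * Real.sinh (c * y 1))
            - k / c := by
    intro i
    have hYic : True := trivial
    -- derivative of the affine correction term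
    have hlin : ∀ y : Fin 3 → ℝ, HasFDerivAt
        (fun t : Fin 3 → ℝ => t 0 * ((Pi.single 3 1 : Fin 4 → ℝ) i / c))
        (((Pi.single 3 1 : Fin 4 → ℝ) i / c) •
          ContinuousLinearMap.proj (R := ℝ) (φ := fun _ : Fin 3 => ℝ) 0) y := fun y =>
      (hasFDerivAt_apply (𝕜 := ℝ) (0 : Fin 3) y).mul_const _
    have hzfd : ∀ y ∈ D, HasFDerivAt
        (fun t => x t i + t 0 * ((Pi.single 3 1 : Fin 4 → ℝ) i / c))
        (((ContinuousLinearMap.proj (R := ℝ) (φ := fun _ : Fin 4 => ℝ) i).comp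
          (fderiv ℝ x y)) + (((Pi.single 3 1 : Fin 4 → ℝ) i / c) •
          ContinuousLinearMap.proj (R := ℝ) (φ := fun _ : Fin 3 => ℝ) 0)) y := fun y hy =>
      (hasFDerivAt_comp_proj x y (hxd y hy) i).add (hlin y)
    have hz1fd : ∀ (j : Fin 3), ∀ y ∈ D, ∀ v : Fin 3 → ℝ,
        fderiv ℝ (fun t => pdv j x t i + (Pi.single 3 1 : Fin 4 → ℝ) i / c) y v
          = fderiv ℝ (pdv j x) y v i := by
      intro j y hy v
      rw [show (fun t => pdv j x t i + (Pi.single 3 1 : Fin 4 → ℝ) i / c)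
        = fun t => (fun s => pdv j x s i) t + (Pi.single 3 1 : Fin 4 → ℝ) i / c from rfl]
      rw [fderiv_add_const]
      exact fderiv_comp_proj (pdv j x) y v (hpd j y hy) i
    have hz2fd : ∀ (j : Fin 3), ∀ y ∈ D, ∀ v : Fin 3 → ℝ,
        fderiv ℝ (fun t => pdv j x t i) y v = fderiv ℝ (pdv j x) y v i := fun j y hy v =>
      fderiv_comp_proj (pdv j x) y v (hpd j y hy) i
    refine key c hc D hDo hDcx hpos
      (fun t => x t i + t 0 * ((Pi.single 3 1 : Fin 4 → ℝ) i / c))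
      (fun t => pdv 0 x t i + (Pi.single 3 1 : Fin 4 → ℝ) i / c)
      (fun t => pdv 1 x t i) (fun t => pdv 2 x t i)
      (fun y hy => (hzfd y hy).differentiableAt)
      (fun y hy => ((hasFDerivAt_comp_proj (pdv 0 x) y (hpd 0 y hy) i).differentiableAt).add_const _)
      (fun y hy => (hasFDerivAt_comp_proj (pdv 1 x) y (hpd 1 y hy) i).differentiableAt)
      (fun y hy => (hasFDerivAt_comp_proj (pdv 2 x) y (hpd 2 y hy) i).differentiableAt)
      ?_ ?_ ?_ ?_ ?_ ?_ ?_ ?_ ?_ ?_ ?_ ?_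
    · intro y hy
      rw [(hzfd y hy).fderiv]
      simp [pdv, Pi.single_apply]
    · intro y hy
      rw [(hzfd y hy).fderiv]
      simp [pdv, Pi.single_apply]
    · intro y hy
      rw [(hzfd y hy).fderiv]
      simp [pdv, Pi.single_apply]
    · intro y hy
      rw [hz1fd 0 y hy]
      have h := h11 y hy
      show pdv 0 (pdv 0 x) y i = _
      rw [h]
      simp [Pi.single_apply]
      field_simp
    · intro y hy
      rw [hz1fd 0 y hy]
      show pdv 1 (pdv 0 x) y i = _
      rw [hsymm y hy 1 0, h12 y hy]
      simp
    · intro y hy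
      rw [hz1fd 0 y hy]
      show pdv 2 (pdv 0 x) y i = _
      rw [hsymm y hy 2 0, h13 y hy]
      simp
    · intro y hy
      rw [hz2fd 1 y hy]
      show pdv 0 (pdv 1 x) y i = _
      rw [h12 y hy]
      simp
    · intro y hy
      rw [hz2fd 1 y hy]
      show pdv 1 (pdv 1 x) y i = _
      rw [h22 y hy]
      simp [Pi.single_apply]
      field_simp
    · intro y hy
      rw [hz2fd 1 y hy]
      show pdv 2 (pdv 1 x) y i = _
      rw [hsymm y hy 2 1, h23 y hy]
      simp
      try ring
    · intro y hy
      rw [hz2fd 2 y hy]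
      show pdv 0 (pdv 2 x) y i = _
      rw [h13 y hy]
      simp
    · intro y hy
      rw [hz2fd 2 y hy]
      show pdv 1 (pdv 2 x) y i = _
      rw [h23 y hy]
      simp
      try ring
    · intro y hy
      rw [hz2fd 2 y hy]
      show pdv 2 (pdv 2 x) y i = _
      rw [h33 y hy]
      simp [Pi.single_apply]
      rcases eq_or_ne i 3 with h3 | h3 <;> simp [h3] <;> field_simp <;> ring
  choose k a p q hmain using main
  refine ⟨fun i => -(k i) / c, a, p, q, ?_⟩
  intro y hy i
  have h := hmain i y hy
  rcases eq_or_ne i 3 with h3 | h3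
  · subst h3
    simp only [Pi.single_eq_same] at h
    simp only [if_pos rfl, ↓reduceIte]
    have hcne : c ≠ 0 := ne_of_gt hc
    field_simp at h ⊢
    linarith
  · simp only [Pi.single_eq_of_ne h3] at h
    simp only [if_neg h3]
    have hcne : c ≠ 0 := ne_of_gt hc
    field_simp at h ⊢
    linarith

end
end
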